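/- arXiv:1806.08487 — 4 statements merged into one kernel-verified Lean document; each statement's English description precedes it below -/
import Mathlib

section
/- Let C ∈ ℝ and C' > 0, and define g(τ) = ∫_τ^∞ C' * exp(-(η+C)^2/2) * (η+C)^2 dη. Then g(τ) / (C' * exp(-(τ+C)^2/2) * τ) → 1 as τ → ∞. -/
/-!
Substituting `x = η + C` turns the numerator into `C' ∫_{τ+C}^∞ x² e^{-x²/2} dx`. For a Gaussian
weight `e^{-bx²}`, integrating `x · (x e^{-bx²})` by parts gives
`∫_s^∞ x² e^{-bx²} = (s e^{-bs²} + ∫_s^∞ e^{-bx²}) / (2b)`, and the Gaussian tail is at most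
`e^{-bs²} / (2bs)` (compare `1 ≤ x / s` on `(s, ∞)`), which is negligible against `s e^{-bs²}`.
Hence `∫_s^∞ x² e^{-bx²} ~ s e^{-bs²} / (2b)`, and the ratio in question behaves like `(τ + C) / τ → 1`.
-/

open MeasureTheory Filter Set Real Topology

section GaussianTail

variable {b : ℝ}

theorem hasDerivAt_neg_exp_neg_mul_sq_div (hb : 0 < b) (x : ℝ) :
    HasDerivAt (fun x => -exp (-b * x ^ 2) / (2 * b)) (x * exp (-b * x ^ 2)) x := by
  refine (((hasDerivAt_pow 2 x).const_mul (-b)).exp.fun_neg.div_const (2 * b)).congr_deriv ?_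
  field_simp
  ring

theorem tendsto_rpow_mul_exp_neg_mul_sq_atTop (hb : 0 < b) (s : ℝ) :
    Tendsto (fun x => x ^ s * exp (-b * x ^ 2)) atTop (𝓝 0) := by
  refine ((tendsto_rpow_abs_mul_exp_neg_mul_sq_cocompact hb s).mono_left
    atTop_le_cocompact).congr' ?_
  filter_upwards [eventually_ge_atTop 0] with x hx
  rw [abs_of_nonneg hx]

theorem integrable_sq_mul_exp_neg_mul_sq (hb : 0 < b) :
    Integrable (fun x : ℝ => x ^ 2 * exp (-b * x ^ 2)) := by
  simpa only [rpow_two] using integrable_rpow_mul_exp_neg_mul_sq hb (s := 2) (by norm_num)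

theorem integral_Ioi_mul_exp_neg_mul_sq (hb : 0 < b) (s : ℝ) :
    ∫ x in Ioi s, x * exp (-b * x ^ 2) = exp (-b * s ^ 2) / (2 * b) := by
  have hlim : Tendsto (fun x => -exp (-b * x ^ 2) / (2 * b)) atTop (𝓝 0) := by
    simpa using (tendsto_rpow_mul_exp_neg_mul_sq_atTop hb 0).neg.div_const (2 * b)
  rw [integral_Ioi_of_hasDerivAt_of_tendsto' (fun x _ => hasDerivAt_neg_exp_neg_mul_sq_div hb x)
    (integrable_mul_exp_neg_mul_sq hb).integrableOn hlim]
  ring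

theorem integral_Ioi_sq_mul_exp_neg_mul_sq (hb : 0 < b) (s : ℝ) :
    ∫ x in Ioi s, x ^ 2 * exp (-b * x ^ 2) =
      (s * exp (-b * s ^ 2) + ∫ x in Ioi s, exp (-b * x ^ 2)) / (2 * b) := by
  set v : ℝ → ℝ := fun x => -exp (-b * x ^ 2) / (2 * b)
  have hcont : Continuous (fun x => x * v x) := by fun_prop
  have hlim : Tendsto (fun x => x * v x) atTop (𝓝 0) := by
    have := (tendsto_rpow_mul_exp_neg_mul_sq_atTop hb 1).neg.div_const (2 * b)
    simp only [rpow_one, neg_zero, zero_div] at this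
    exact this.congr fun x => by simp only [v]; ring
  have := integral_Ioi_mul_deriv_eq_deriv_mul (u := id) (u' := fun _ => 1) (a := s)
    (fun x _ => hasDerivAt_id x) (fun x _ => hasDerivAt_neg_exp_neg_mul_sq_div hb x) ?_ ?_
    (hcont.continuousAt.tendsto.mono_left nhdsWithin_le_nhds) hlim
  · simp only [id, one_mul, v, integral_div, integral_neg] at this
    simp_rw [sq, ← mul_assoc] at this ⊢
    rw [this]
    ring
  · exact (integrable_sq_mul_exp_neg_mul_sq hb).integrableOn.congr_fun
      (fun x _ => by simp only [Pi.mul_apply, id]; ring) measurableSet_Ioi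
  · exact ((integrable_exp_neg_mul_sq hb).neg.div_const (2 * b)).integrableOn.congr_fun
      (fun x _ => by simp only [Pi.mul_apply, Pi.neg_apply]; ring) measurableSet_Ioi

theorem integral_Ioi_exp_neg_mul_sq_le (hb : 0 < b) {s : ℝ} (hs : 0 < s) :
    ∫ x in Ioi s, exp (-b * x ^ 2) ≤ exp (-b * s ^ 2) / (2 * b * s) := by
  calc ∫ x in Ioi s, exp (-b * x ^ 2)
      ≤ ∫ x in Ioi s, s⁻¹ * (x * exp (-b * x ^ 2)) := by
        refine setIntegral_mono_on (integrable_exp_neg_mul_sq hb).integrableOn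
          ((integrable_mul_exp_neg_mul_sq hb).const_mul s⁻¹).integrableOn measurableSet_Ioi
          fun x hx => ?_
        rw [← mul_assoc]
        exact le_mul_of_one_le_left (exp_pos _).le ((one_le_inv_mul₀ hs).mpr (le_of_lt hx))
    _ = exp (-b * s ^ 2) / (2 * b * s) := by
        rw [integral_const_mul, integral_Ioi_mul_exp_neg_mul_sq hb]
        field_simp

theorem tendsto_integral_Ioi_exp_neg_mul_sq_div (hb : 0 < b) :
    Tendsto (fun s => (∫ x in Ioi s, exp (-b * x ^ 2)) / (exp (-b * s ^ 2) * s)) atTop (𝓝 0) := by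
  have hbound : Tendsto (fun s : ℝ => (2 * b * s ^ 2)⁻¹) atTop (𝓝 0) :=
    tendsto_inv_atTop_zero.comp ((tendsto_pow_atTop two_ne_zero).const_mul_atTop (by positivity))
  refine squeeze_zero' ?_ ?_ hbound
  · filter_upwards [eventually_ge_atTop 0] with s hs
    exact div_nonneg (setIntegral_nonneg measurableSet_Ioi fun x _ => (exp_pos _).le)
      (mul_nonneg (exp_pos _).le hs)
  · filter_upwards [eventually_gt_atTop 0] with s hs
    calc (∫ x in Ioi s, exp (-b * x ^ 2)) / (exp (-b * s ^ 2) * s)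
        ≤ exp (-b * s ^ 2) / (2 * b * s) / (exp (-b * s ^ 2) * s) := by
          gcongr
          exact integral_Ioi_exp_neg_mul_sq_le hb hs
      _ = (2 * b * s ^ 2)⁻¹ := by
          field_simp

theorem tendsto_integral_Ioi_sq_mul_exp_neg_mul_sq_div (hb : 0 < b) :
    Tendsto (fun s => (∫ x in Ioi s, x ^ 2 * exp (-b * x ^ 2)) / (exp (-b * s ^ 2) * s)) atTop
      (𝓝 (2 * b)⁻¹) := by
  have := ((tendsto_integral_Ioi_exp_neg_mul_sq_div hb).const_add 1).div_const (2 * b)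
  rw [add_zero, one_div] at this
  refine this.congr' ?_
  filter_upwards [eventually_ne_atTop 0] with s hs
  rw [integral_Ioi_sq_mul_exp_neg_mul_sq hb]
  field_simp

end GaussianTail

theorem setIntegral_Ioi_comp_add_right {E : Type*} [NormedAddCommGroup E] [NormedSpace ℝ E]
    (f : ℝ → E) (a c : ℝ) : ∫ x in Ioi a, f (x + c) = ∫ x in Ioi (a + c), f x := by
  have := (measurePreserving_add_right volume c).setIntegral_preimage_emb
    (MeasurableEquiv.addRight c).measurableEmbedding f (Ioi (a + c))
  rwa [preimage_add_const_Ioi, add_sub_cancel_right] at this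

theorem tendsto_add_const_div_self_atTop (c : ℝ) :
    Tendsto (fun x : ℝ => (x + c) / x) atTop (𝓝 1) := by
  have := (tendsto_const_nhds (x := c).div_atTop tendsto_id).const_add 1
  rw [add_zero] at this
  refine this.congr' ?_
  filter_upwards [eventually_ne_atTop 0] with x hx
  simp only [id]
  field_simp

/-- With `g(τ) = ∫_τ^∞ C' exp(-(η+C)²/2) (η+C)² dη`, we have
`g(τ) / (C' exp(-(τ+C)²/2) τ) → 1` as `τ → ∞`. -/
theorem stmt_3 (C C' : ℝ) (hC' : 0 < C') :
    Tendsto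
      (fun τ : ℝ =>
        (∫ η in Set.Ioi τ, C' * Real.exp (-(η + C) ^ 2 / 2) * (η + C) ^ 2) /
          (C' * Real.exp (-(τ + C) ^ 2 / 2) * τ))
      atTop (nhds 1) := by
  have hF := (tendsto_integral_Ioi_sq_mul_exp_neg_mul_sq_div (b := 1 / 2) (by norm_num)).comp
    (tendsto_atTop_add_const_right _ C tendsto_id)
  have hlim := hF.mul (tendsto_add_const_div_self_atTop C)
  rw [show (2 * (1 / 2 : ℝ))⁻¹ * 1 = 1 by norm_num] at hlim
  refine hlim.congr' ?_
  filter_upwards [eventually_ne_atTop 0, eventually_ne_atTop (-C)] with τ hτ hτC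
  have hs : τ + C ≠ 0 := fun h => hτC (by linarith)
  have hshift : ∫ η in Ioi τ, C' * exp (-(η + C) ^ 2 / 2) * (η + C) ^ 2
      = C' * ∫ x in Ioi (τ + C), x ^ 2 * exp (-(1 / 2) * x ^ 2) := by
    rw [← setIntegral_Ioi_comp_add_right, ← integral_const_mul]
    congr 1 with η
    ring_nf
  simp only [Function.comp_apply, id, hshift]
  field_simp
end

section
/- Let d ≥ 2 and let x : [0,∞) → (0,∞) be a solution of x' = -x^d + h(x) where h(x)/x^d → 0 as x → 0⁺, and suppose x(τ) → 0 as τ → ∞. Then τ^{1/(d-1)} x(τ) → (d-1)^{-1/(d-1)} as τ → ∞. -/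
open Filter Asymptotics Topology

/-!
The substitution `u = x ^ (-(d - 1))` turns the equation into
`u' = (d - 1) (1 - h(x) / x ^ d)`, and since `x → 0` the right-hand side tends to `d - 1`.
A function whose derivative tends to `L` grows like `L τ` (mean value theorem), so
`u τ / τ → d - 1`; raising to the power `-1/(d - 1)` gives the claim.
-/

theorem isLittleO_id_atTop_of_hasDerivAt_of_tendsto_zero {g g' : ℝ → ℝ}
    (hg : ∀ᶠ t in atTop, HasDerivAt g (g' t) t) (hg' : Tendsto g' atTop (𝓝 0)) :
    g =o[atTop] id := by
  refine isLittleO_iff.2 fun c hc => ?_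
  have hsmall : ∀ᶠ t in atTop, ‖g' t‖ < c / 2 :=
    (tendsto_order.1 (tendsto_zero_iff_norm_tendsto_zero.1 hg')).2 _ (half_pos hc)
  obtain ⟨T, hT⟩ := eventually_atTop.1 ((hg.and hsmall).and (eventually_ge_atTop 0))
  filter_upwards [(isLittleO_const_id_atTop (g T)).def (half_pos hc), eventually_ge_atTop T]
    with t hgT hTt
  have hT0 : 0 ≤ T := (hT T le_rfl).2
  have hmvt : ‖g t - g T‖ ≤ c / 2 * (t - T) := by
    simpa [Real.norm_of_nonneg (sub_nonneg.2 hTt)] using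
      (convex_Icc T t).norm_image_sub_le_of_norm_hasDerivWithin_le
        (fun s hs => (hT s hs.1).1.1.hasDerivWithinAt) (fun s hs => (hT s hs.1).1.2.le)
        (Set.left_mem_Icc.2 hTt) (Set.right_mem_Icc.2 hTt)
  rw [id, Real.norm_of_nonneg (hT0.trans hTt)] at hgT ⊢
  calc ‖g t‖ ≤ ‖g t - g T‖ + ‖g T‖ := norm_le_norm_sub_add _ _
    _ ≤ c * t := by nlinarith

theorem tendsto_div_atTop_of_hasDerivAt_of_tendsto {f f' : ℝ → ℝ} {L : ℝ}
    (hf : ∀ᶠ t in atTop, HasDerivAt f (f' t) t) (hf' : Tendsto f' atTop (𝓝 L)) :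
    Tendsto (fun t => f t / t) atTop (𝓝 L) := by
  have hg : (fun t => f t - L * t) =o[atTop] id :=
    isLittleO_id_atTop_of_hasDerivAt_of_tendsto_zero
      (hf.mono fun t ht => ht.sub ((hasDerivAt_id t).const_mul L))
      (by simpa using hf'.sub_const L)
  refine (zero_add L ▸ hg.tendsto_div_nhds_zero.add_const L).congr' ?_
  filter_upwards [eventually_ne_atTop 0] with t ht
  simp [sub_div, ht]

theorem rpow_neg_div_rpow_neg_one_div {a t c : ℝ} (ha : 0 < a) (ht : 0 < t) (hc : c ≠ 0) :
    (a ^ (-c) / t) ^ (-1 / c) = t ^ (1 / c) * a := by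
  rw [Real.div_rpow (Real.rpow_nonneg ha.le _) ht.le, ← Real.rpow_mul ha.le,
    show -c * (-1 / c) = 1 by field_simp, Real.rpow_one, neg_div, Real.rpow_neg ht.le,
    div_inv_eq_mul, mul_comm]

theorem hasDerivAt_rpow_neg_sub_one_of_hasDerivAt {x : ℝ → ℝ} {d : ℕ} {r τ : ℝ} (hx : 0 < x τ)
    (hode : HasDerivAt x (-(x τ) ^ d + r) τ) :
    HasDerivAt (fun t => x t ^ (-(d - 1 : ℝ))) ((d - 1) * (1 - r / x τ ^ d)) τ := by
  convert hode.rpow_const (p := -(d - 1 : ℝ)) (Or.inl hx.ne') using 1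
  rw [show -(d - 1 : ℝ) - 1 = -d by ring, Real.rpow_neg hx.le, Real.rpow_natCast]
  field_simp
  ring

/-- Center-manifold asymptotics: a positive solution of `x' = -x^d + h(x)` with
`h(x) = o(x^d)` as `x → 0⁺` which tends to `0` satisfies
`τ^(1/(d-1)) x(τ) → (d-1)^(-1/(d-1))`. -/
theorem stmt_8 (d : ℕ) (hd : 2 ≤ d) (x h : ℝ → ℝ)
    (hxpos : ∀ τ : ℝ, 0 ≤ τ → 0 < x τ)
    (hh : Tendsto (fun y : ℝ => h y / y ^ d) (nhdsWithin 0 (Set.Ioi 0)) (nhds 0))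
    (hode : ∀ τ : ℝ, 0 ≤ τ → HasDerivAt x (-(x τ) ^ d + h (x τ)) τ)
    (hlim : Tendsto x atTop (nhds 0)) :
    Tendsto (fun τ : ℝ => τ ^ ((1 : ℝ) / (d - 1 : ℝ)) * x τ) atTop
      (nhds ((d - 1 : ℝ) ^ (-(1 : ℝ) / (d - 1 : ℝ)))) := by
  have hd1 : (0 : ℝ) < d - 1 := by
    have : (2 : ℝ) ≤ d := by exact_mod_cast hd
    linarith
  have hx_eventually_pos : ∀ᶠ τ in atTop, 0 < x τ :=
    eventually_atTop.2 ⟨0, hxpos⟩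
  have hh_along_x : Tendsto (fun τ => h (x τ) / x τ ^ d) atTop (𝓝 0) :=
    hh.comp (tendsto_nhdsWithin_iff.2 ⟨hlim, hx_eventually_pos⟩)
  have hu : ∀ᶠ τ in atTop, HasDerivAt (fun t => x t ^ (-(d - 1 : ℝ)))
      ((d - 1) * (1 - h (x τ) / x τ ^ d)) τ := by
    filter_upwards [eventually_ge_atTop 0] with τ hτ
    exact hasDerivAt_rpow_neg_sub_one_of_hasDerivAt (hxpos τ hτ) (hode τ hτ)
  have hu' : Tendsto (fun τ => ((d : ℝ) - 1) * (1 - h (x τ) / x τ ^ d)) atTop (𝓝 (d - 1)) := by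
    simpa using (hh_along_x.const_sub 1).const_mul ((d : ℝ) - 1)
  refine ((tendsto_div_atTop_of_hasDerivAt_of_tendsto hu hu').rpow_const
    (Or.inl hd1.ne')).congr' ?_
  filter_upwards [hx_eventually_pos, eventually_gt_atTop 0] with τ hxτ hτ
  exact rpow_neg_div_rpow_neg_one_div hxτ hτ hd1.ne'
end

section
/- Let a ∈ (0,1/2), θ ∈ (0,π/2). The point (r,x) = (0, (1-2a)/(2a cos θ)) is an equilibrium of the system dr/dτ = -(r x / sin θ)(1 + 2a cos θ · x), dx/dτ = (2x²/sin θ)(cos θ (1-2a) x - 2a cos²θ x²), and the Jacobian there has two negative eigenvalues (it is a hyperbolic sink). -/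
/-!
On the invariant line `r = 0` the field has the skew-product form `(r ⬝ ρ(x), ẋ(x))`, so its Jacobian
at a point `(0, x)` is diagonal with entries `ρ(x)` and `ẋ'(x)`. At `x₀ = (1-2a)/(2a cos θ)` we have
`2a cos θ ⬝ x₀ = 1 - 2a`, which makes `x₀` a root of `ẋ` and gives `ρ(x₀) = -(2-2a) x₀ / sin θ` and
`ẋ'(x₀) = -2 (1-2a) cos θ ⬝ x₀² / sin θ`, both negative for `a ∈ (0,1/2)`, `θ ∈ (0,π/2)`.
-/

open ContinuousLinearMap

theorem hasFDerivAt_fst_mul_prodMk_of_fst_eq_zero {𝕜 : Type*} [NontriviallyNormedField 𝕜]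
    {ρ g : 𝕜 → 𝕜} {g' x : 𝕜} (hρ : DifferentiableAt 𝕜 ρ x) (hg : HasDerivAt g g' x) :
    HasFDerivAt (fun p : 𝕜 × 𝕜 => (p.1 * ρ p.2, g p.2))
      ((ρ x • fst 𝕜 𝕜 𝕜).prod (g' • snd 𝕜 𝕜 𝕜)) (0, x) := by
  have hfst : HasFDerivAt (fun p : 𝕜 × 𝕜 => p.1 * ρ p.2) (ρ x • fst 𝕜 𝕜 𝕜) (0, x) := by
    refine (hasFDerivAt_fst.mul (hρ.hasDerivAt.comp_hasFDerivAt _ hasFDerivAt_snd)).congr_fderiv ?_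
    ext <;> simp
  exact hfst.prodMk (hg.comp_hasFDerivAt _ hasFDerivAt_snd)

namespace AndrewsAtInfinity

variable (a s c : ℝ)

/-- The desingularized field in the chart `(r, x)`, with `s = sin θ` and `c = cos θ`. -/
noncomputable def field (p : ℝ × ℝ) : ℝ × ℝ :=
  (-(p.1 * p.2 / s) * (1 + 2 * a * c * p.2),
    2 * p.2 ^ 2 / s * (c * (1 - 2 * a) * p.2 - 2 * a * c ^ 2 * p.2 ^ 2))

noncomputable def radialRate (x : ℝ) : ℝ := -(x / s) * (1 + 2 * a * c * x)

noncomputable def xDot (x : ℝ) : ℝ := 2 * x ^ 2 / s * (c * (1 - 2 * a) * x - 2 * a * c ^ 2 * x ^ 2)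

theorem field_apply (p : ℝ × ℝ) : field a s c p = (p.1 * radialRate a s c p.2, xDot a s c p.2) := by
  simp only [field, radialRate, xDot, Prod.mk.injEq, and_true]
  ring

theorem xDot_equilibrium : xDot a s c ((1 - 2 * a) / (2 * a * c)) = 0 := by
  -- when `2ac = 0` the quotient is the junk value `0`, which is a root as well
  rcases eq_or_ne (2 * a * c) 0 with h | h
  · simp [xDot, h]
  · have hx : 2 * a * c * ((1 - 2 * a) / (2 * a * c)) = 1 - 2 * a := mul_div_cancel₀ _ h
    simp only [xDot]
    linear_combination (-(2 * ((1 - 2 * a) / (2 * a * c)) ^ 3 * c / s)) * hx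

theorem field_equilibrium : field a s c (0, (1 - 2 * a) / (2 * a * c)) = (0, 0) := by
  rw [field_apply, xDot_equilibrium, zero_mul]

theorem hasDerivAt_xDot (x : ℝ) :
    HasDerivAt (xDot a s c) (2 * c * x ^ 2 / s * (3 * (1 - 2 * a) - 8 * a * c * x)) x := by
  have hpoly : xDot a s c = fun y => 2 * c * (1 - 2 * a) / s * y ^ 3 - 4 * a * c ^ 2 / s * y ^ 4 :=
    funext fun y => by simp only [xDot]; ring
  rw [hpoly]
  refine (((hasDerivAt_pow 3 x).const_mul (2 * c * (1 - 2 * a) / s)).fun_sub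
    ((hasDerivAt_pow 4 x).const_mul (4 * a * c ^ 2 / s))).congr_deriv ?_
  norm_num
  ring

theorem hasFDerivAt_field (x : ℝ) :
    HasFDerivAt (field a s c)
      ((radialRate a s c x • fst ℝ ℝ ℝ).prod
        ((2 * c * x ^ 2 / s * (3 * (1 - 2 * a) - 8 * a * c * x)) • snd ℝ ℝ ℝ)) (0, x) := by
  rw [show field a s c = fun p => (p.1 * radialRate a s c p.2, xDot a s c p.2) from
    funext (field_apply a s c)]
  exact hasFDerivAt_fst_mul_prodMk_of_fst_eq_zero (by unfold radialRate; fun_prop)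
    (hasDerivAt_xDot a s c x)

variable {a s c} (ha0 : 0 < a) (ha : a < 1 / 2) (hs : 0 < s) (hc : 0 < c)
include ha0 ha hc

theorem equilibrium_pos : 0 < (1 - 2 * a) / (2 * a * c) :=
  div_pos (by linarith) (by positivity)

include hs

theorem radialRate_equilibrium_neg : radialRate a s c ((1 - 2 * a) / (2 * a * c)) < 0 := by
  have hx := equilibrium_pos ha0 ha hc
  have : 0 < (1 - 2 * a) / (2 * a * c) / s * (1 + 2 * a * c * ((1 - 2 * a) / (2 * a * c))) := by
    positivity
  simp only [radialRate]
  linarith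

theorem xDot_deriv_equilibrium_neg :
    2 * c * ((1 - 2 * a) / (2 * a * c)) ^ 2 / s *
      (3 * (1 - 2 * a) - 8 * a * c * ((1 - 2 * a) / (2 * a * c))) < 0 := by
  have hx : 2 * a * c * ((1 - 2 * a) / (2 * a * c)) = 1 - 2 * a :=
    mul_div_cancel₀ _ (by positivity)
  have hfactor : 3 * (1 - 2 * a) - 8 * a * c * ((1 - 2 * a) / (2 * a * c)) = -(1 - 2 * a) := by
    linear_combination (-4) * hx
  rw [hfactor, mul_neg]
  have := equilibrium_pos ha0 ha hc
  have : 0 < 1 - 2 * a := by linarith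
  exact neg_neg_of_pos (by positivity)

end AndrewsAtInfinity

open AndrewsAtInfinity in
/-- For `a ∈ (0,1/2)`, `θ ∈ (0,π/2)`, the point `(0, (1-2a)/(2a cos θ))` is an
equilibrium of the desingularized Andrews system and the Jacobian there has two
negative eigenvalues (hyperbolic sink). -/
theorem stmt_9 (a θ : ℝ) (ha0 : 0 < a) (ha : a < 1 / 2)
    (hθ0 : 0 < θ) (hθ : θ < Real.pi / 2) :
    (fun p : ℝ × ℝ =>
        (-(p.1 * p.2 / Real.sin θ) * (1 + 2 * a * Real.cos θ * p.2),
          2 * p.2 ^ 2 / Real.sin θ *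
            (Real.cos θ * (1 - 2 * a) * p.2 - 2 * a * Real.cos θ ^ 2 * p.2 ^ 2)))
      ((0 : ℝ), (1 - 2 * a) / (2 * a * Real.cos θ)) = (0, 0) ∧
    ∃ l1 l2 : ℝ, l1 < 0 ∧ l2 < 0 ∧
      HasFDerivAt
        (fun p : ℝ × ℝ =>
          (-(p.1 * p.2 / Real.sin θ) * (1 + 2 * a * Real.cos θ * p.2),
            2 * p.2 ^ 2 / Real.sin θ *
              (Real.cos θ * (1 - 2 * a) * p.2 - 2 * a * Real.cos θ ^ 2 * p.2 ^ 2)))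
        ((l1 • ContinuousLinearMap.fst ℝ ℝ ℝ).prod
          (l2 • ContinuousLinearMap.snd ℝ ℝ ℝ))
        ((0 : ℝ), (1 - 2 * a) / (2 * a * Real.cos θ)) := by
  have hs : 0 < Real.sin θ := Real.sin_pos_of_pos_of_lt_pi hθ0 (by linarith [Real.pi_pos])
  have hc : 0 < Real.cos θ := Real.cos_pos_of_mem_Ioo ⟨by linarith [Real.pi_pos], hθ⟩
  exact ⟨field_equilibrium a _ _, _, _, radialRate_equilibrium_neg ha0 ha hs hc,
    xDot_deriv_equilibrium_neg ha0 ha hs hc, hasFDerivAt_field a _ _ _⟩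
end

section
/- Let α > 1. The planar system dr/dη = (r/(α-1))(c r^{α+1} x̄^α - 1), dx̄/dη = -((α+1)/(α-1)) x̄ (c r^{α+1} x̄^α - 1) + c r^{α+1} x̄^{α+1} - x̄ - x̄^α has equilibria (0,0) and (0, (2/(α-1))^{1/(α-1)}); the Jacobian at (0,0) is diag(-1/(α-1), 2/(α-1)) (a saddle), and the Jacobian at (0, (2/(α-1))^{1/(α-1)}) is diag(-1/(α-1), -2) (a sink). -/
/-!
On the invariant line `r = 0` the field reduces to `(0, 2x̄/(α-1) - x̄^α)`, whose zeros are
`x̄ = 0` and `x̄^(α-1) = 2/(α-1)`. Every occurrence of `r` beyond the linear term `-r/(α-1)` carries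
a factor `r^(α+1)`, so the Jacobian on that line is `diag(-1/(α-1), 2/(α-1) - α x̄^(α-1))`.
-/

open ContinuousLinearMap

theorem Nat.cast_sub_one_ne_zero {n : ℕ} (hn : 1 < n) : (n : ℝ) - 1 ≠ 0 :=
  sub_ne_zero.2 (by exact_mod_cast hn.ne')

theorem Real.rpow_one_div_natCast_sub_one_pow {a : ℝ} (ha : 0 ≤ a) {n : ℕ} (hn : 1 < n) :
    (a ^ (1 / ((n : ℝ) - 1))) ^ (n - 1) = a := by
  have hcast : ((n - 1 : ℕ) : ℝ) = (n : ℝ) - 1 := by push_cast [Nat.cast_sub hn.le]; ring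
  simpa only [one_div, hcast] using Real.rpow_inv_natCast_pow ha (n := n - 1) (by omega)

/-- The blown-up quenching vector field in the chart `λ̄ = 1`, in coordinates `p = (r, x̄)`. -/
noncomputable def quenchingField (α : ℕ) (c : ℝ) (p : ℝ × ℝ) : ℝ × ℝ :=
  (p.1 / ((α : ℝ) - 1) * (c * p.1 ^ (α + 1) * p.2 ^ α - 1),
    -(((α : ℝ) + 1) / ((α : ℝ) - 1)) * p.2 * (c * p.1 ^ (α + 1) * p.2 ^ α - 1)
      + c * p.1 ^ (α + 1) * p.2 ^ (α + 1) - p.2 - p.2 ^ α)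

namespace quenchingField

variable {α : ℕ} (c : ℝ)

theorem apply_zero_left (hα : 1 < α) (x : ℝ) :
    quenchingField α c (0, x) = (0, 2 / ((α : ℝ) - 1) * x - x ^ α) := by
  have hα' := Nat.cast_sub_one_ne_zero hα
  ext
  · simp [quenchingField]
  · simp only [quenchingField, zero_pow (Nat.succ_ne_zero α), mul_zero, zero_mul]
    field_simp
    ring

theorem hasFDerivAt_zero_left (hα : 1 < α) (x : ℝ) :
    HasFDerivAt (quenchingField α c)
      (((-1 / ((α : ℝ) - 1)) • fst ℝ ℝ ℝ).prod
        ((2 / ((α : ℝ) - 1) - α * x ^ (α - 1)) • snd ℝ ℝ ℝ)) (0, x) := by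
  have hr : HasFDerivAt (fun p : ℝ × ℝ => p.1) (fst ℝ ℝ ℝ) ((0 : ℝ), x) := hasFDerivAt_fst
  have hx : HasFDerivAt (fun p : ℝ × ℝ => p.2) (snd ℝ ℝ ℝ) ((0 : ℝ), x) := hasFDerivAt_snd
  have hg := ((hr.pow (α + 1)).const_mul c).mul (hx.pow α) |>.sub_const 1
  have hF := ((hr.mul_const ((α : ℝ) - 1)⁻¹).mul hg).prodMk
    ((((hx.const_mul (-(((α : ℝ) + 1) / ((α : ℝ) - 1)))).mul hg).add
      (((hr.pow (α + 1)).const_mul c).mul (hx.pow (α + 1)))).sub hx |>.sub (hx.pow α))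
  refine hF.congr_fderiv (ContinuousLinearMap.ext fun v => ?_)
  have hα' := Nat.cast_sub_one_ne_zero hα
  simp only [zero_mul, ne_eq, Nat.add_eq_zero_iff, one_ne_zero, and_false, not_false_eq_true, zero_pow,
    mul_zero, nsmul_eq_mul, zero_smul, add_tsub_cancel_right, zero_pow (by omega : α ≠ 0), smul_zero, add_zero,
    Pi.mul_apply, zero_sub, neg_smul, one_smul, zero_add, neg_mul, smul_neg, neg_neg, Nat.cast_add, Nat.cast_one,
    prod_apply, neg_apply, smul_apply, coe_fst', smul_eq_mul, sub_apply, coe_snd', Prod.mk.injEq]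
  constructor
  · ring
  · field_simp
    ring

end quenchingField

/-- For integer `α > 1`, the quenching blow-up system has equilibria `(0,0)` and
`(0, (2/(α-1))^(1/(α-1)))`, with Jacobians `diag(-1/(α-1), 2/(α-1))` (saddle)
and `diag(-1/(α-1), -2)` (sink) respectively. -/
theorem stmt_12 (α : ℕ) (hα : 1 < α) (c : ℝ) :
    let F : ℝ × ℝ → ℝ × ℝ := fun p =>
      (p.1 / ((α : ℝ) - 1) * (c * p.1 ^ (α + 1) * p.2 ^ α - 1),
        -(((α : ℝ) + 1) / ((α : ℝ) - 1)) * p.2 * (c * p.1 ^ (α + 1) * p.2 ^ α - 1)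
          + c * p.1 ^ (α + 1) * p.2 ^ (α + 1) - p.2 - p.2 ^ α)
    let xs : ℝ := (2 / ((α : ℝ) - 1)) ^ ((1 : ℝ) / ((α : ℝ) - 1))
    F (0, 0) = (0, 0) ∧ F (0, xs) = (0, 0) ∧
    HasFDerivAt F
      (((-1 / ((α : ℝ) - 1)) • ContinuousLinearMap.fst ℝ ℝ ℝ).prod
        ((2 / ((α : ℝ) - 1)) • ContinuousLinearMap.snd ℝ ℝ ℝ)) ((0 : ℝ), (0 : ℝ)) ∧
    HasFDerivAt F
      (((-1 / ((α : ℝ) - 1)) • ContinuousLinearMap.fst ℝ ℝ ℝ).prod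
        ((-2 : ℝ) • ContinuousLinearMap.snd ℝ ℝ ℝ)) ((0 : ℝ), xs) := by
  intro F xs
  change quenchingField α c (0, 0) = (0, 0) ∧ quenchingField α c (0, xs) = (0, 0) ∧
    HasFDerivAt (quenchingField α c) _ _ ∧ HasFDerivAt (quenchingField α c) _ _
  have hα' := Nat.cast_sub_one_ne_zero hα
  have hxs : xs ^ (α - 1) = 2 / ((α : ℝ) - 1) :=
    Real.rpow_one_div_natCast_sub_one_pow
      (div_nonneg zero_le_two (sub_nonneg.2 (by exact_mod_cast hα.le))) hα
  have hxs_pow : xs ^ α = 2 / ((α : ℝ) - 1) * xs := by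
    rw [← hxs, ← pow_succ, Nat.sub_add_cancel hα.le]
  have h0 : (0 : ℝ) ^ (α - 1) = 0 := zero_pow (by omega)
  refine ⟨?_, ?_, ?_, ?_⟩
  · simp [quenchingField.apply_zero_left c hα, zero_pow (by omega : α ≠ 0)]
  · simp [quenchingField.apply_zero_left c hα, hxs_pow]
  · simpa [h0] using quenchingField.hasFDerivAt_zero_left c hα 0
  · convert quenchingField.hasFDerivAt_zero_left c hα xs using 3
    rw [hxs]
    field_simp
    ring
end
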